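/- arXiv:math/9912220 — 3 statements merged into one kernel-verified Lean document; each statement's English description precedes it below -/
import Mathlib

section
/- Let H₁ be a complex Hilbert space, (Ω, μ) a measure space, ζ : Ω → ℂ measurable, and K : Ω → B(H₁) Bochner integrable with w := ∫ ‖K(ω)‖/(1+|ζ(ω)|) dμ(ω) < ∞. Then for every z in the open set ℂ \ closure(range ζ) the Bochner integral V₁(z) := ∫ (z/(z−ζ(ω)))·K(ω) dμ(ω) exists (the integrand is Bochner integrable), and the map z ↦ V₁(z) is holomorphic (complex differentiable) on ℂ \ closure(range ζ) with values in the bounded operators on H₁. -/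
/-!
Since `z / (z - ζ) • K = z • ((z - ζ)⁻¹ • K)`, it suffices to treat the Cauchy transform
`z ↦ ∫ (z - ζ ω)⁻¹ • K ω dμ`. If the ball of radius `δ` about `z₀` misses the range of `ζ`, then on
the ball of radius `δ / 2` the integrand is bounded by `(δ / 2)⁻¹ ‖K‖` and its `z`-derivative
`-(z - ζ)⁻² • K` by `(δ / 2)⁻² ‖K‖`, so one may differentiate under the integral sign.
-/

open MeasureTheory Metric Set

section CauchyTransform

variable {Ω : Type*} {ζ : Ω → ℂ}

lemma le_norm_sub_of_ball_subset_compl_closure_range {z : ℂ} {δ : ℝ}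
    (h : ball z δ ⊆ (closure (range ζ))ᶜ) (ω : Ω) : δ ≤ ‖z - ζ ω‖ := by
  by_contra! hlt
  refine h ?_ (subset_closure (mem_range_self ω))
  rwa [mem_ball, dist_comm, dist_eq_norm]

lemma norm_inv_sub_le_of_ball_subset_compl_closure_range {z : ℂ} {δ : ℝ} (hδ : 0 < δ)
    (h : ball z δ ⊆ (closure (range ζ))ᶜ) (ω : Ω) : ‖(z - ζ ω)⁻¹‖ ≤ δ⁻¹ := by
  rw [norm_inv]
  exact inv_anti₀ hδ (le_norm_sub_of_ball_subset_compl_closure_range h ω)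

variable {E : Type*} [MeasurableSpace Ω] {μ : Measure Ω} [NormedAddCommGroup E] [NormedSpace ℂ E]
  {f : Ω → E}

lemma integrable_inv_sub_smul (hζ : AEMeasurable ζ μ) (hf : Integrable f μ) {z : ℂ}
    (hz : z ∉ closure (range ζ)) : Integrable (fun ω ↦ (z - ζ ω)⁻¹ • f ω) μ := by
  obtain ⟨δ, hδ, hball⟩ := isOpen_iff.1 isClosed_closure.isOpen_compl z hz
  exact hf.bdd_smul δ⁻¹ (aemeasurable_const.sub hζ).inv.aestronglyMeasurable
    (.of_forall (norm_inv_sub_le_of_ball_subset_compl_closure_range hδ hball))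

lemma differentiableOn_integral_inv_sub_smul [CompleteSpace E] (hζ : AEMeasurable ζ μ)
    (hf : Integrable f μ) :
    DifferentiableOn ℂ (fun z ↦ ∫ ω, (z - ζ ω)⁻¹ • f ω ∂μ) (closure (range ζ))ᶜ := by
  intro z₀ hz₀
  obtain ⟨δ, hδ, hball⟩ := isOpen_iff.1 isClosed_closure.isOpen_compl z₀ hz₀
  have hδ2 : 0 < δ / 2 := half_pos hδ
  have hnear : ∀ z ∈ ball z₀ (δ / 2), ball z (δ / 2) ⊆ (closure (range ζ))ᶜ := fun z hz ↦
    (ball_subset_ball' (by rw [mem_ball] at hz; linarith)).trans hball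
  have hderiv := hasDerivAt_integral_of_dominated_loc_of_deriv_le
    (F := fun z ω ↦ (z - ζ ω)⁻¹ • f ω) (F' := fun z ω ↦ (-1 / (z - ζ ω) ^ 2) • f ω)
    (bound := fun ω ↦ (δ / 2)⁻¹ ^ 2 * ‖f ω‖) (ball_mem_nhds z₀ hδ2)
    (.of_forall fun z ↦ (aemeasurable_const.sub hζ).inv.aestronglyMeasurable.smul hf.1)
    (integrable_inv_sub_smul hζ hf hz₀)
    ((((aemeasurable_const.sub hζ).pow_const 2).const_div (-1)).aestronglyMeasurable.smul hf.1)
    (.of_forall fun ω z hz ↦ ?bound) (hf.norm.const_mul _) (.of_forall fun ω z hz ↦ ?deriv)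
  · exact hderiv.2.differentiableAt.differentiableWithinAt
  case bound =>
    rw [norm_smul, norm_div, norm_neg, norm_one, norm_pow, one_div, ← inv_pow, ← norm_inv]
    gcongr
    exact norm_inv_sub_le_of_ball_subset_compl_closure_range hδ2 (hnear z hz) ω
  case deriv =>
    have hne : z - ζ ω ≠ 0 := norm_pos_iff.1
      (hδ2.trans_le (le_norm_sub_of_ball_subset_compl_closure_range (hnear z hz) ω))
    simpa using (((hasDerivAt_id z).sub_const (ζ ω)).inv hne).smul_const (f ω)

end CauchyTransform

theorem V1_integrable_and_holomorphic_general
    {H : Type*} [NormedAddCommGroup H] [InnerProductSpace ℂ H] [CompleteSpace H]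
    {Ω : Type*} [MeasurableSpace Ω] (μ : Measure Ω)
    (ζ : Ω → ℂ) (hζ : Measurable ζ)
    (K : Ω → H →L[ℂ] H) (hK : Integrable K μ) :
    (∀ z ∈ (closure (Set.range ζ))ᶜ,
        Integrable (fun ω => (z / (z - ζ ω)) • K ω) μ) ∧
    DifferentiableOn ℂ (fun z : ℂ => ∫ ω, (z / (z - ζ ω)) • K ω ∂μ)
      (closure (Set.range ζ))ᶜ := by
  have hsplit : ∀ z ω, (z / (z - ζ ω)) • K ω = z • ((z - ζ ω)⁻¹ • K ω) := fun z ω ↦ by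
    rw [div_eq_mul_inv, mul_smul]
  simp only [hsplit, integral_smul]
  exact ⟨fun z hz ↦ (integrable_inv_sub_smul hζ.aemeasurable hK hz).smul z,
    differentiableOn_id.smul (differentiableOn_integral_inv_sub_smul hζ.aemeasurable hK)⟩

/-- Lemma 1.1 (well-definedness and holomorphy of the analytically continued
function `V₁(z) = ∫ z/(z-ζ(ω)) K(ω) dμ(ω)` outside the closure of the contour). -/
theorem V1_integrable_and_holomorphic
    {H : Type*} [NormedAddCommGroup H] [InnerProductSpace ℂ H] [CompleteSpace H]
    {Ω : Type*} [MeasurableSpace Ω] (μ : Measure Ω)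
    (ζ : Ω → ℂ) (hζ : Measurable ζ)
    (K : Ω → H →L[ℂ] H) (hK : Integrable K μ)
    (hw : Integrable (fun ω => ‖K ω‖ / (1 + ‖ζ ω‖)) μ) :
    (∀ z ∈ (closure (Set.range ζ))ᶜ,
        Integrable (fun ω => (z / (z - ζ ω)) • K ω) μ) ∧
    DifferentiableOn ℂ (fun z : ℂ => ∫ ω, (z / (z - ζ ω)) • K ω ∂μ)
      (closure (Set.range ζ))ᶜ :=
  V1_integrable_and_holomorphic_general μ ζ hζ K hK
end

section
/- Under the smallness conditions v < 1 and v·‖Ã‖ < d₀(1−v)²/4, for every real r with r_min ≤ r < r_max the basic equation X = V(Ã + X) has exactly one solution X in the closed ball { X ∈ B(H₁) : ‖X‖ ≤ r }; moreover this solution is the same for every such r and satisfies ‖X‖ ≤ r_min. (For every X with ‖X‖ ≤ r < d₀ the operators Ã + X − ζ(ω)·I are boundedly invertible for a.e. ω, so that V(Ã+X) is well defined.) -/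
open MeasureTheory ContinuousLinearMap


section AuxSolvability


lemma aux_perturb {R : Type*} [NormedRing R] [NormOneClass R] [CompleteSpace R]
    (u : Rˣ) (δ : ℝ) (hδ : 0 < δ) (hu : ‖((u⁻¹ : Rˣ) : R)‖ ≤ δ⁻¹)
    (X : R) (hX : ‖X‖ < δ) :
    ∃ w : Rˣ, (w : R) = (u : R) + X ∧ ‖((w⁻¹ : Rˣ) : R)‖ ≤ (δ - ‖X‖)⁻¹ := by
  have ht : ‖-(((u⁻¹ : Rˣ) : R) * X)‖ < 1 := by
    rw [norm_neg]
    calc ‖((u⁻¹ : Rˣ) : R) * X‖ ≤ ‖((u⁻¹ : Rˣ) : R)‖ * ‖X‖ := norm_mul_le _ _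
    _ ≤ δ⁻¹ * ‖X‖ := by gcongr
    _ < δ⁻¹ * δ := by gcongr
    _ = 1 := inv_mul_cancel₀ hδ.ne'
  set t := -(((u⁻¹ : Rˣ) : R) * X) with htdef
  refine ⟨u * Units.oneSub t ht, ?_, ?_⟩
  · push_cast [Units.val_oneSub, htdef]
    rw [sub_neg_eq_add, mul_add, mul_one, ← mul_assoc, u.mul_inv, one_mul]
  · rw [mul_inv_rev]
    calc ‖(((Units.oneSub t ht)⁻¹ * u⁻¹ : Rˣ) : R)‖
        ≤ ‖(((Units.oneSub t ht)⁻¹ : Rˣ) : R)‖ * ‖((u⁻¹ : Rˣ) : R)‖ := norm_mul_le _ _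
      _ ≤ (1 - ‖t‖)⁻¹ * δ⁻¹ := by
          have hgeo : ‖(((Units.oneSub t ht)⁻¹ : Rˣ) : R)‖ ≤ (1 - ‖t‖)⁻¹ := by
            have : (((Units.oneSub t ht)⁻¹ : Rˣ) : R) = ∑' n : ℕ, t ^ n := rfl
            rw [this]
            calc ‖∑' n : ℕ, t ^ n‖ ≤ ‖(1:R)‖ - 1 + (1 - ‖t‖)⁻¹ :=
                  tsum_geometric_le_of_norm_lt_one t ht
            _ = (1 - ‖t‖)⁻¹ := by rw [norm_one]; ring
          exact mul_le_mul hgeo hu (norm_nonneg _) (inv_nonneg.mpr (by linarith))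
      _ ≤ (δ - ‖X‖)⁻¹ := by
          have h1 : ‖t‖ ≤ δ⁻¹ * ‖X‖ := by
            rw [htdef, norm_neg]
            calc ‖((u⁻¹ : Rˣ) : R) * X‖ ≤ ‖((u⁻¹ : Rˣ) : R)‖ * ‖X‖ := norm_mul_le _ _
            _ ≤ δ⁻¹ * ‖X‖ := by gcongr
          have h2 : 0 < 1 - ‖t‖ := by linarith
          have h3 : 0 < δ - ‖X‖ := by linarith
          rw [← mul_inv]
          apply inv_anti₀ h3
          have : δ⁻¹ * ‖X‖ * δ ≤ ‖X‖ := by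
            rw [mul_comm (δ⁻¹) (‖X‖), mul_assoc, inv_mul_cancel₀ hδ.ne', mul_one]
          nlinarith [norm_nonneg X, norm_nonneg t]



lemma aux_resolvent {H : Type*} [NormedAddCommGroup H] [InnerProductSpace ℂ H] [CompleteSpace H]
    [Nontrivial H] (A : H →L[ℂ] H) (hA : IsSelfAdjoint A) (z : ℂ) (δ : ℝ) (hδ : 0 < δ)
    (h : δ ≤ Metric.infDist z (spectrum ℂ A)) :
    ∃ u : (H →L[ℂ] H)ˣ, ((u : H →L[ℂ] H) = A - z • (1 : H →L[ℂ] H)) ∧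
      ‖((u⁻¹ : (H →L[ℂ] H)ˣ) : H →L[ℂ] H)‖ ≤ δ⁻¹ := by
  haveI : IsStarNormal A := hA.isStarNormal
  have hz : z ∉ spectrum ℂ A := by
    intro hz
    have := Metric.infDist_zero_of_mem hz
    linarith
  have hdistw : ∀ w ∈ spectrum ℂ A, δ ≤ ‖w - z‖ := by
    intro w hw
    have := Metric.infDist_le_dist_of_mem (x := z) hw
    rw [Complex.dist_eq] at this
    calc δ ≤ ‖z - w‖ := le_trans h this
    _ = ‖w - z‖ := by rw [norm_sub_rev]
  have hunit : IsUnit (A - z • (1 : H →L[ℂ] H)) := by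
    have h1 := spectrum.notMem_iff.mp hz
    have h2 := h1.neg
    rwa [neg_sub, Algebra.algebraMap_eq_smul_one] at h2
  have hcont : ContinuousOn (fun w : ℂ => (w - z)⁻¹) (spectrum ℂ A) := by
    apply ContinuousOn.inv₀ (by fun_prop)
    intro w hw
    have := hdistw w hw
    intro hwz
    rw [sub_eq_zero] at hwz
    rw [hwz, sub_self, norm_zero] at this
    linarith
  set b := cfc (fun w : ℂ => (w - z)⁻¹) A with hb
  have hsub : A - z • (1 : H →L[ℂ] H) = cfc (fun w : ℂ => w - z) A := by
    rw [cfc_sub (fun w : ℂ => w) (fun _ : ℂ => z) A, cfc_id' ℂ A, cfc_const z A,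
      Algebra.algebraMap_eq_smul_one]
  have hmul : (A - z • (1 : H →L[ℂ] H)) * b = 1 := by
    rw [hsub, hb, ← cfc_mul _ _ A (by fun_prop) hcont]
    have : cfc (fun w : ℂ => (w - z) * (w - z)⁻¹) A = cfc (fun _ : ℂ => (1:ℂ)) A := by
      apply cfc_congr
      intro w hw
      have hd := hdistw w hw
      have : w - z ≠ 0 := by
        intro hwz
        rw [hwz, norm_zero] at hd; linarith
      field_simp
    rw [this, cfc_const (1:ℂ) A, map_one]
  have huinv : ((hunit.unit⁻¹ : (H →L[ℂ] H)ˣ) : H →L[ℂ] H) = b := by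
    have h1 : ((hunit.unit : (H →L[ℂ] H)ˣ) : H →L[ℂ] H) = A - z • 1 := hunit.unit_spec
    calc ((hunit.unit⁻¹ : (H →L[ℂ] H)ˣ) : H →L[ℂ] H)
        = ((hunit.unit⁻¹ : (H →L[ℂ] H)ˣ) : H →L[ℂ] H) * ((A - z • 1) * b) := by
          rw [hmul, mul_one]
      _ = (((hunit.unit⁻¹ : (H →L[ℂ] H)ˣ) : H →L[ℂ] H) * (hunit.unit : (H →L[ℂ] H)ˣ)) * b := by
          rw [h1, mul_assoc]
      _ = b := by rw [Units.inv_mul, one_mul]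
  refine ⟨hunit.unit, hunit.unit_spec, ?_⟩
  rw [huinv, hb]
  apply norm_cfc_le (by positivity)
  intro w hw
  rw [norm_inv]
  have hd := hdistw w hw
  exact inv_anti₀ hδ hd

lemma aux_resolvent_perturbed {H : Type*} [NormedAddCommGroup H] [InnerProductSpace ℂ H]
    [CompleteSpace H] [Nontrivial H] (A : H →L[ℂ] H) (hA : IsSelfAdjoint A)
    (d₀ : ℝ) (hd₀ : 0 < d₀) (z : ℂ) (h : d₀ ≤ Metric.infDist z (spectrum ℂ A))
    (X : H →L[ℂ] H) (hX : ‖X‖ < d₀) :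
    ∃ w : (H →L[ℂ] H)ˣ, ((w : H →L[ℂ] H) = A + X - z • (1 : H →L[ℂ] H)) ∧
      ‖((w⁻¹ : (H →L[ℂ] H)ˣ) : H →L[ℂ] H)‖ ≤ (Metric.infDist z (spectrum ℂ A) - ‖X‖)⁻¹ := by
  set δ := Metric.infDist z (spectrum ℂ A) with hδdef
  have hδ : 0 < δ := lt_of_lt_of_le hd₀ h
  obtain ⟨u, hu1, hu2⟩ := aux_resolvent A hA z δ hδ le_rfl
  obtain ⟨w, hw1, hw2⟩ := aux_perturb u δ hδ hu2 X (lt_of_lt_of_le hX h)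
  exact ⟨w, by rw [hw1, hu1, sub_add_eq_add_sub], hw2⟩


lemma real_frac1 {k d d₀ r L : ℝ} (hk : 0 ≤ k) (hL : 0 ≤ L) (hr : 0 ≤ r)
    (h1 : r < d₀) (h2 : d₀ ≤ d) :
    k * ((L + r) * (d - r)⁻¹) ≤ k / d * (d₀ * (L + r) / (d₀ - r)) := by
  have hd : 0 < d := lt_of_lt_of_le (lt_of_le_of_lt hr h1) h2
  have hdr : 0 < d - r := by linarith
  have hd0r : 0 < d₀ - r := by linarith
  rw [div_mul_div_comm, show k * ((L + r) * (d - r)⁻¹) = k * (L + r) / (d - r) by ring,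
    div_le_div_iff₀ hdr (by positivity)]
  nlinarith [mul_nonneg (mul_nonneg (mul_nonneg hk (add_nonneg hL hr)) hr)
    (sub_nonneg.mpr h2)]

lemma real_frac2 {k d d₀ r L : ℝ} (hk : 0 ≤ k) (hL : 0 ≤ L) (hr : 0 ≤ r)
    (h1 : r < d₀) (h2 : d₀ ≤ d) :
    k * ((d + L) * ((d - r)⁻¹ * (d - r)⁻¹)) ≤ k / d * (d₀ * (d₀ + L) / (d₀ - r) ^ 2) := by
  have hd : 0 < d := lt_of_lt_of_le (lt_of_le_of_lt hr h1) h2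
  have hdr : 0 < d - r := by linarith
  have hd0r : 0 < d₀ - r := by linarith
  rw [div_mul_div_comm,
    show k * ((d + L) * ((d - r)⁻¹ * (d - r)⁻¹)) = k * (d + L) / (d - r) ^ 2 by
      rw [← mul_inv, ← sq]; ring,
    div_le_div_iff₀ (by positivity) (by positivity)]
  have hd₀ : 0 < d₀ := lt_of_le_of_lt hr h1
  have he : 0 ≤ d - d₀ := sub_nonneg.mpr h2
  have t1 : 0 ≤ (d - d₀) * ((d₀ - r) * (d₀ * L + 2 * d₀ * r + L * r)) :=
    mul_nonneg he (mul_nonneg hd0r.le (by nlinarith))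
  have t2 : 0 ≤ (d - d₀) ^ 2 * (d₀ * L + r * (2 * d₀ - r)) :=
    mul_nonneg (sq_nonneg _) (by nlinarith)
  have hG : 0 ≤ d₀ * (d₀ + L) * (d - r) ^ 2 - d * (d + L) * (d₀ - r) ^ 2 := by
    have hid : d₀ * (d₀ + L) * (d - r) ^ 2 - d * (d + L) * (d₀ - r) ^ 2 =
        (d - d₀) * ((d₀ - r) * (d₀ * L + 2 * d₀ * r + L * r)) +
        (d - d₀) ^ 2 * (d₀ * L + r * (2 * d₀ - r)) := by ring
    rw [hid]; linarith
  nlinarith [mul_nonneg hk hG]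


lemma real_params {d₀ v L rmin rmax : ℝ} (hd₀ : 0 < d₀) (hv0 : 0 ≤ v) (hv1 : v < 1)
    (hL : 0 ≤ L) (hv2 : v * L < d₀ * (1 - v) ^ 2 / 4)
    (hrmin : rmin = d₀ * (1 - v) / 2 - Real.sqrt (d₀ ^ 2 * (1 - v) ^ 2 / 4 - d₀ * v * L))
    (hrmax : rmax = d₀ - Real.sqrt (v * d₀ * (d₀ + L))) :
    0 ≤ rmin ∧ rmin < rmax ∧ rmax ≤ d₀ ∧
      v * (d₀ * (L + rmin)) = rmin * (d₀ - rmin) ∧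
      (∀ r : ℝ, r < rmax → v * (d₀ * (d₀ + L)) < (d₀ - r) ^ 2) := by
  set D := d₀ ^ 2 * (1 - v) ^ 2 / 4 - d₀ * v * L with hD
  have hDpos : 0 < D := by
    have := mul_lt_mul_of_pos_left hv2 hd₀
    rw [hD]; nlinarith
  have hsq : Real.sqrt D ^ 2 = D := Real.sq_sqrt hDpos.le
  have hsqnn : 0 ≤ Real.sqrt D := Real.sqrt_nonneg _
  have hs2 : 0 ≤ v * d₀ * (d₀ + L) := by positivity
  have hsqS : Real.sqrt (v * d₀ * (d₀ + L)) ^ 2 = v * d₀ * (d₀ + L) := Real.sq_sqrt hs2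
  have hsqSnn : 0 ≤ Real.sqrt (v * d₀ * (d₀ + L)) := Real.sqrt_nonneg _
  have ha : 0 ≤ d₀ * (1 - v) / 2 := by nlinarith
  have hrmin0 : 0 ≤ rmin := by
    rw [hrmin, sub_nonneg]
    have h1 : Real.sqrt D ≤ Real.sqrt ((d₀ * (1 - v) / 2) ^ 2) := by
      apply Real.sqrt_le_sqrt; nlinarith [mul_nonneg (mul_nonneg hd₀.le hv0) hL]
    rwa [Real.sqrt_sq ha] at h1
  have hsqSlt : Real.sqrt (v * d₀ * (d₀ + L)) < d₀ * (1 + v) / 2 := by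
    rw [show d₀ * (1 + v) / 2 = Real.sqrt ((d₀ * (1 + v) / 2) ^ 2) from
      (Real.sqrt_sq (by nlinarith)).symm]
    apply Real.sqrt_lt_sqrt hs2
    nlinarith
  have hminmax : rmin < rmax := by
    rw [hrmin, hrmax]
    nlinarith
  have hmaxd : rmax ≤ d₀ := by rw [hrmax]; linarith
  refine ⟨hrmin0, hminmax, hmaxd, ?_, ?_⟩
  · rw [hrmin]; linear_combination hsq
  · intro r hr
    have h1 : Real.sqrt (v * d₀ * (d₀ + L)) < d₀ - r := by rw [hrmax] at hr; linarith
    nlinarith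

lemma aux_pointwise_bound {H : Type*} [NormedAddCommGroup H] [InnerProductSpace ℂ H]
    [CompleteSpace H] [Nontrivial H] (A : H →L[ℂ] H) (hA : IsSelfAdjoint A)
    (d₀ : ℝ) (hd₀ : 0 < d₀) {r : ℝ} (hr0 : 0 ≤ r) (hrd : r < d₀)
    (z : ℂ) (hz : d₀ ≤ Metric.infDist z (spectrum ℂ A)) (Kw : H →L[ℂ] H)
    (X : H →L[ℂ] H) (hX : ‖X‖ ≤ r) :
    ‖Kw ∘L ((A + X) ∘L Ring.inverse (A + X - z • (1 : H →L[ℂ] H)))‖ ≤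
      ‖Kw‖ / Metric.infDist z (spectrum ℂ A) * (d₀ * (‖A‖ + r) / (d₀ - r)) := by
  set d := Metric.infDist z (spectrum ℂ A) with hd
  have hXd : ‖X‖ < d₀ := lt_of_le_of_lt hX hrd
  obtain ⟨w, hw, hwn⟩ := aux_resolvent_perturbed A hA d₀ hd₀ z hz X hXd
  have hIX : Ring.inverse (A + X - z • (1 : H →L[ℂ] H)) = ((w⁻¹ : (H →L[ℂ] H)ˣ) : H →L[ℂ] H) := by
    rw [← hw, Ring.inverse_unit]
  have hdr : (0:ℝ) < d - r := by linarith [lt_of_lt_of_le hrd hz]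
  have hwn' : ‖((w⁻¹ : (H →L[ℂ] H)ˣ) : H →L[ℂ] H)‖ ≤ (d - r)⁻¹ :=
    le_trans hwn (inv_anti₀ hdr (by linarith))
  calc ‖Kw ∘L ((A + X) ∘L Ring.inverse (A + X - z • (1 : H →L[ℂ] H)))‖
      ≤ ‖Kw‖ * ‖(A + X) ∘L Ring.inverse (A + X - z • (1 : H →L[ℂ] H))‖ := opNorm_comp_le _ _
    _ ≤ ‖Kw‖ * (‖A + X‖ * ‖Ring.inverse (A + X - z • (1 : H →L[ℂ] H))‖) := by
        gcongr; exact opNorm_comp_le _ _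
    _ ≤ ‖Kw‖ * ((‖A‖ + r) * (d - r)⁻¹) := by
        have h1 : ‖A + X‖ ≤ ‖A‖ + r := le_trans (norm_add_le _ _) (by linarith)
        rw [hIX]
        refine mul_le_mul_of_nonneg_left ?_ (norm_nonneg _)
        exact mul_le_mul h1 hwn' (norm_nonneg _) (by linarith [norm_nonneg A])
    _ ≤ ‖Kw‖ / d * (d₀ * (‖A‖ + r) / (d₀ - r)) :=
        real_frac1 (norm_nonneg _) (norm_nonneg _) hr0 hrd hz

lemma aux_pointwise_diff {H : Type*} [NormedAddCommGroup H] [InnerProductSpace ℂ H]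
    [CompleteSpace H] [Nontrivial H] (A : H →L[ℂ] H) (hA : IsSelfAdjoint A)
    (d₀ : ℝ) (hd₀ : 0 < d₀) {r : ℝ} (hr0 : 0 ≤ r) (hrd : r < d₀)
    (z : ℂ) (hz : d₀ ≤ Metric.infDist z (spectrum ℂ A)) (Kw : H →L[ℂ] H)
    (X X' : H →L[ℂ] H) (hX : ‖X‖ ≤ r) (hX' : ‖X'‖ ≤ r) :
    ‖Kw ∘L ((A + X) ∘L Ring.inverse (A + X - z • (1 : H →L[ℂ] H))) -
      Kw ∘L ((A + X') ∘L Ring.inverse (A + X' - z • (1 : H →L[ℂ] H)))‖ ≤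
      ‖Kw‖ / Metric.infDist z (spectrum ℂ A) * (d₀ * (d₀ + ‖A‖) / (d₀ - r) ^ 2) * ‖X - X'‖ := by
  set d := Metric.infDist z (spectrum ℂ A) with hd
  have hXd : ‖X‖ < d₀ := lt_of_le_of_lt hX hrd
  have hXd' : ‖X'‖ < d₀ := lt_of_le_of_lt hX' hrd
  obtain ⟨w, hw, hwn⟩ := aux_resolvent_perturbed A hA d₀ hd₀ z hz X hXd
  obtain ⟨w', hw', hwn'⟩ := aux_resolvent_perturbed A hA d₀ hd₀ z hz X' hXd'
  have hdr : (0:ℝ) < d - r := by linarith [lt_of_lt_of_le hrd hz]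
  have hwr : ‖((w⁻¹ : (H →L[ℂ] H)ˣ) : H →L[ℂ] H)‖ ≤ (d - r)⁻¹ :=
    le_trans hwn (inv_anti₀ hdr (by linarith))
  have hwr' : ‖((w'⁻¹ : (H →L[ℂ] H)ˣ) : H →L[ℂ] H)‖ ≤ (d - r)⁻¹ :=
    le_trans hwn' (inv_anti₀ hdr (by linarith))
  -- |z| ≤ d + ‖A‖
  have hspec : (spectrum ℂ A).Nonempty := spectrum.nonempty A
  haveI : Nonempty (spectrum ℂ A) := hspec.to_subtype
  have hzn : ‖z‖ ≤ d + ‖A‖ := by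
    have h1 : ‖z‖ - ‖A‖ ≤ d := by
      rw [hd, Metric.infDist_eq_iInf]
      apply le_ciInf
      intro y
      have h2 : ‖(y : ℂ)‖ ≤ ‖A‖ := spectrum.norm_le_norm_of_mem y.2
      have h3 : ‖z‖ - ‖(y:ℂ)‖ ≤ dist z y := by
        rw [dist_eq_norm]; exact norm_sub_norm_le _ _
      linarith
    linarith
  -- algebra
  have hIX : Ring.inverse (A + X - z • (1 : H →L[ℂ] H)) = ((w⁻¹ : (H →L[ℂ] H)ˣ) : H →L[ℂ] H) := by
    rw [← hw, Ring.inverse_unit]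
  have hIX' : Ring.inverse (A + X' - z • (1 : H →L[ℂ] H)) = ((w'⁻¹ : (H →L[ℂ] H)ˣ) : H →L[ℂ] H) := by
    rw [← hw', Ring.inverse_unit]
  have hAX : A + X = (w : H →L[ℂ] H) + z • (1 : H →L[ℂ] H) := by rw [hw]; abel
  have hAX' : A + X' = (w' : H →L[ℂ] H) + z • (1 : H →L[ℂ] H) := by rw [hw']; abel
  have e1 : (A + X) * ((w⁻¹ : (H →L[ℂ] H)ˣ) : H →L[ℂ] H)
      = 1 + z • ((w⁻¹ : (H →L[ℂ] H)ˣ) : H →L[ℂ] H) := by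
    rw [hAX, add_mul, Units.mul_inv, smul_mul_assoc, one_mul]
  have e1' : (A + X') * ((w'⁻¹ : (H →L[ℂ] H)ˣ) : H →L[ℂ] H)
      = 1 + z • ((w'⁻¹ : (H →L[ℂ] H)ˣ) : H →L[ℂ] H) := by
    rw [hAX', add_mul, Units.mul_inv, smul_mul_assoc, one_mul]
  have hres : ((w⁻¹ : (H →L[ℂ] H)ˣ) : H →L[ℂ] H) - ((w'⁻¹ : (H →L[ℂ] H)ˣ) : H →L[ℂ] H)
      = ((w⁻¹ : (H →L[ℂ] H)ˣ) : H →L[ℂ] H) * (X' - X) * ((w'⁻¹ : (H →L[ℂ] H)ˣ) : H →L[ℂ] H) := by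
    have h5 : (w' : H →L[ℂ] H) - (w : H →L[ℂ] H) = X' - X := by rw [hw, hw']; abel
    rw [← h5, mul_sub, sub_mul, mul_assoc, Units.mul_inv, mul_one, Units.inv_mul, one_mul]
  have hdiffeq : Kw ∘L ((A + X) ∘L Ring.inverse (A + X - z • (1 : H →L[ℂ] H))) -
      Kw ∘L ((A + X') ∘L Ring.inverse (A + X' - z • (1 : H →L[ℂ] H)))
      = z • (Kw * (((w⁻¹ : (H →L[ℂ] H)ˣ) : H →L[ℂ] H) * (X' - X) *
          ((w'⁻¹ : (H →L[ℂ] H)ˣ) : H →L[ℂ] H))) := by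
    simp only [← ContinuousLinearMap.mul_def, hIX, hIX', e1, e1', ← hres]
    rw [mul_add, mul_add, mul_smul_comm, mul_smul_comm, mul_sub, smul_sub]
    abel
  rw [hdiffeq, norm_smul]
  have hnorm1 : ‖Kw * (((w⁻¹ : (H →L[ℂ] H)ˣ) : H →L[ℂ] H) * (X' - X) *
      ((w'⁻¹ : (H →L[ℂ] H)ˣ) : H →L[ℂ] H))‖ ≤ ‖Kw‖ * ((d - r)⁻¹ * ‖X - X'‖ * (d - r)⁻¹) := by
    calc ‖Kw * (((w⁻¹ : (H →L[ℂ] H)ˣ) : H →L[ℂ] H) * (X' - X) *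
        ((w'⁻¹ : (H →L[ℂ] H)ˣ) : H →L[ℂ] H))‖
        ≤ ‖Kw‖ * (‖((w⁻¹ : (H →L[ℂ] H)ˣ) : H →L[ℂ] H)‖ * ‖X' - X‖ *
          ‖((w'⁻¹ : (H →L[ℂ] H)ˣ) : H →L[ℂ] H)‖) := by
          calc _ ≤ ‖Kw‖ * ‖((w⁻¹ : (H →L[ℂ] H)ˣ) : H →L[ℂ] H) * (X' - X) *
              ((w'⁻¹ : (H →L[ℂ] H)ˣ) : H →L[ℂ] H)‖ := norm_mul_le _ _
          _ ≤ _ := by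
              gcongr
              calc _ ≤ ‖((w⁻¹ : (H →L[ℂ] H)ˣ) : H →L[ℂ] H) * (X' - X)‖ *
                  ‖((w'⁻¹ : (H →L[ℂ] H)ˣ) : H →L[ℂ] H)‖ := norm_mul_le _ _
              _ ≤ _ := by gcongr; exact norm_mul_le _ _
      _ ≤ ‖Kw‖ * ((d - r)⁻¹ * ‖X - X'‖ * (d - r)⁻¹) := by
          rw [norm_sub_rev (X') X]
          gcongr <;> first | exact hwr | exact hwr' | positivity
  have h6 := real_frac2 (k := ‖Kw‖) (d := d) (d₀ := d₀) (r := r) (L := ‖A‖)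
    (norm_nonneg _) (norm_nonneg _) hr0 hrd hz
  have hfinal : (d + ‖A‖) * (‖Kw‖ * ((d - r)⁻¹ * ‖X - X'‖ * (d - r)⁻¹)) ≤
      ‖Kw‖ / d * (d₀ * (d₀ + ‖A‖) / (d₀ - r) ^ 2) * ‖X - X'‖ := by
    calc (d + ‖A‖) * (‖Kw‖ * ((d - r)⁻¹ * ‖X - X'‖ * (d - r)⁻¹))
        = ‖Kw‖ * ((d + ‖A‖) * ((d - r)⁻¹ * (d - r)⁻¹)) * ‖X - X'‖ := by ring
      _ ≤ _ := mul_le_mul_of_nonneg_right h6 (norm_nonneg _)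
  have hdA : (0:ℝ) ≤ d + ‖A‖ := by linarith [norm_nonneg A, lt_of_lt_of_le hrd hz]
  exact le_trans (mul_le_mul hzn hnorm1 (norm_nonneg _) hdA) hfinal

end AuxSolvability

/-- The right-hand side `V₁(Y,Γ) = ∫ K(ω) Y (Y - ζ(ω))⁻¹ dμ(ω)` of the basic equation. -/
noncomputable def Vint {H : Type*} [NormedAddCommGroup H] [NormedSpace ℂ H] [CompleteSpace H]
    {Ω : Type*} [MeasurableSpace Ω] (μ : Measure Ω)
    (ζ : Ω → ℂ) (K : Ω → H →L[ℂ] H) (Y : H →L[ℂ] H) : H →L[ℂ] H :=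
  ∫ ω, K ω ∘L (Y ∘L Ring.inverse (Y - ζ ω • (1 : H →L[ℂ] H))) ∂μ

/-- `X` is a solution of the basic equation `X = V₁(Ã + X, Γ)`; the first two
conjuncts make the Bochner integral `V₁(Ã + X, Γ)` well defined. -/
def IsSolution {H : Type*} [NormedAddCommGroup H] [NormedSpace ℂ H] [CompleteSpace H]
    {Ω : Type*} [MeasurableSpace Ω] (μ : Measure Ω)
    (ζ : Ω → ℂ) (K : Ω → H →L[ℂ] H) (A X : H →L[ℂ] H) : Prop :=
  (∀ᵐ ω ∂μ, IsUnit (A + X - ζ ω • (1 : H →L[ℂ] H))) ∧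
  Integrable (fun ω =>
    K ω ∘L ((A + X) ∘L Ring.inverse (A + X - ζ ω • (1 : H →L[ℂ] H)))) μ ∧
  X = Vint μ ζ K (A + X)

/-- Theorem 2.1 (`Solvability`): under the smallness conditions (2.6) the basic
equation `X = V₁(Ã + X, Γ)` is uniquely solvable in every closed ball of radius
`r ∈ [r_min, r_max)`; the solution is the same for all such `r` and satisfies
`‖X‖ ≤ r_min`. -/
theorem basic_equation_solvability
    {H : Type*} [NormedAddCommGroup H] [InnerProductSpace ℂ H] [CompleteSpace H]
    {Ω : Type*} [MeasurableSpace Ω] (μ : Measure Ω)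
    (ζ : Ω → ℂ) (hζ : Measurable ζ)
    (K : Ω → H →L[ℂ] H) (hK : Integrable K μ)
    (A : H →L[ℂ] H) (hA : IsSelfAdjoint A)
    (d₀ : ℝ) (hd₀ : 0 < d₀)
    (hdist : ∀ᵐ ω ∂μ, d₀ ≤ Metric.infDist (ζ ω) (spectrum ℂ A))
    (hvInt : Integrable (fun ω => ‖K ω‖ / Metric.infDist (ζ ω) (spectrum ℂ A)) μ)
    (v : ℝ) (hv : v = ∫ ω, ‖K ω‖ / Metric.infDist (ζ ω) (spectrum ℂ A) ∂μ)
    (hv1 : v < 1) (hv2 : v * ‖A‖ < d₀ * (1 - v) ^ 2 / 4)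
    (rmin rmax : ℝ)
    (hrmin : rmin = d₀ * (1 - v) / 2 -
      Real.sqrt (d₀ ^ 2 * (1 - v) ^ 2 / 4 - d₀ * v * ‖A‖))
    (hrmax : rmax = d₀ - Real.sqrt (v * d₀ * (d₀ + ‖A‖))) :
    ∃ X : H →L[ℂ] H, (‖X‖ ≤ rmin ∧ IsSolution μ ζ K A X) ∧
      ∀ r : ℝ, rmin ≤ r → r < rmax →
        ∀ X' : H →L[ℂ] H, ‖X'‖ ≤ r → IsSolution μ ζ K A X' → X' = X := by
  have hv0 : 0 ≤ v := by
    rw [hv]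
    apply integral_nonneg
    intro ω
    exact div_nonneg (norm_nonneg _) Metric.infDist_nonneg
  obtain ⟨hrmin0, hminmax, hmaxd, hfix, hqlt⟩ :=
    real_params hd₀ hv0 hv1 (norm_nonneg A) hv2 hrmin hrmax
  have hrmind : rmin < d₀ := lt_of_lt_of_le hminmax hmaxd
  rcases subsingleton_or_nontrivial H with hH | hH
  · haveI : Subsingleton (H →L[ℂ] H) :=
      ⟨fun f g => ContinuousLinearMap.ext fun x => Subsingleton.elim _ _⟩
    refine ⟨0, ⟨by simpa using hrmin0, ?_, ?_, ?_⟩, fun r _ _ X' _ _ => Subsingleton.elim _ _⟩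
    · filter_upwards with ω
      exact isUnit_of_subsingleton _
    · have h1 : (fun ω => K ω ∘L ((A + 0) ∘L
          Ring.inverse (A + 0 - ζ ω • (1 : H →L[ℂ] H)))) = fun _ => (0 : H →L[ℂ] H) := by
        funext ω; exact Subsingleton.elim _ _
      rw [h1]
      exact integrable_zero _ _ _
    · exact Subsingleton.elim _ _
  · haveI : Nontrivial (H →L[ℂ] H) := by
      obtain ⟨x, hx⟩ := exists_ne (0 : H)
      refine nontrivial_of_ne 1 0 fun h => hx ?_
      simpa using DFunLike.congr_fun h x
    -- measurability of the integrand
    have hmeas : ∀ X : H →L[ℂ] H, ‖X‖ < d₀ → AEStronglyMeasurable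
        (fun ω => K ω ∘L ((A + X) ∘L
          Ring.inverse (A + X - ζ ω • (1 : H →L[ℂ] H)))) μ := by
      intro X hX
      set S : Set ℂ := {z : ℂ | d₀ ≤ Metric.infDist z (spectrum ℂ A)} with hS
      have hSmeas : MeasurableSet S :=
        (isClosed_le continuous_const (Metric.continuous_infDist_pt _)).measurableSet
      set g : ℂ → (H →L[ℂ] H) := fun z =>
        Ring.inverse (A + X - z • (1 : H →L[ℂ] H)) with hg
      have hcg : ContinuousOn g S := by
        intro z hz
        obtain ⟨w, hw, -⟩ := aux_resolvent_perturbed A hA d₀ hd₀ z hz X hX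
        have h1 : ContinuousAt (fun z : ℂ => A + X - z • (1 : H →L[ℂ] H)) z := by fun_prop
        have h2 : ContinuousAt Ring.inverse (A + X - z • (1 : H →L[ℂ] H)) := by
          rw [← hw]
          exact NormedRing.inverse_continuousAt w
        exact (ContinuousAt.comp (g := Ring.inverse)
          (f := fun z : ℂ => A + X - z • (1 : H →L[ℂ] H)) h2 h1).continuousWithinAt
      have haemem : ∀ᵐ z ∂(μ.map ζ), z ∈ S := by
        apply (MeasureTheory.ae_map_iff hζ.aemeasurable hSmeas).mpr
        filter_upwards [hdist] with ω hω
        exact hω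
      have hgm : AEStronglyMeasurable g (μ.map ζ) := by
        have h3 := hcg.aestronglyMeasurable_of_isSeparable hSmeas
          ((TopologicalSpace.IsSeparable.of_separableSpace S)) (μ := μ.map ζ)
        rwa [Measure.restrict_eq_self_of_ae_mem haemem] at h3
      have hcomp : AEStronglyMeasurable (fun ω => g (ζ ω)) μ :=
        hgm.comp_aemeasurable hζ.aemeasurable
      have heq : (fun ω => K ω ∘L ((A + X) ∘L
          Ring.inverse (A + X - ζ ω • (1 : H →L[ℂ] H)))) =
          fun ω => K ω * ((A + X) * g (ζ ω)) := rfl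
      rw [heq]
      exact hK.aestronglyMeasurable.mul (aestronglyMeasurable_const.mul hcomp)
    -- integrability
    have hint : ∀ (X : H →L[ℂ] H) (r : ℝ), ‖X‖ ≤ r → 0 ≤ r → r < d₀ →
        Integrable (fun ω => K ω ∘L ((A + X) ∘L
          Ring.inverse (A + X - ζ ω • (1 : H →L[ℂ] H)))) μ := by
      intro X r hXr hr0 hrd
      apply Integrable.mono' (hvInt.mul_const (d₀ * (‖A‖ + r) / (d₀ - r)))
        (hmeas X (lt_of_le_of_lt hXr hrd))
      filter_upwards [hdist] with ω hω
      exact aux_pointwise_bound A hA d₀ hd₀ hr0 hrd (ζ ω) hω (K ω) X hXr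
    -- integral norm bound
    have hVnorm : ∀ (X : H →L[ℂ] H) (r : ℝ), ‖X‖ ≤ r → 0 ≤ r → r < d₀ →
        ‖Vint μ ζ K (A + X)‖ ≤ v * (d₀ * (‖A‖ + r) / (d₀ - r)) := by
      intro X r hXr hr0 hrd
      have h1 : ‖Vint μ ζ K (A + X)‖ ≤
          ∫ ω, ‖K ω‖ / Metric.infDist (ζ ω) (spectrum ℂ A) * (d₀ * (‖A‖ + r) / (d₀ - r)) ∂μ := by
        apply norm_integral_le_of_norm_le (hvInt.mul_const _)
        filter_upwards [hdist] with ω hω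
        exact aux_pointwise_bound A hA d₀ hd₀ hr0 hrd (ζ ω) hω (K ω) X hXr
      rwa [integral_mul_const, ← hv] at h1
    -- contraction estimate
    have hdiff : ∀ (r : ℝ), 0 ≤ r → r < d₀ → ∀ X X' : H →L[ℂ] H, ‖X‖ ≤ r → ‖X'‖ ≤ r →
        ‖Vint μ ζ K (A + X) - Vint μ ζ K (A + X')‖ ≤
          v * (d₀ * (d₀ + ‖A‖) / (d₀ - r) ^ 2) * ‖X - X'‖ := by
      intro r hr0 hrd X X' hXr hXr'
      have hI := hint X r hXr hr0 hrd
      have hI' := hint X' r hXr' hr0 hrd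
      have h2 : Vint μ ζ K (A + X) - Vint μ ζ K (A + X') =
          ∫ ω, (K ω ∘L ((A + X) ∘L Ring.inverse (A + X - ζ ω • (1 : H →L[ℂ] H))) -
            K ω ∘L ((A + X') ∘L Ring.inverse (A + X' - ζ ω • (1 : H →L[ℂ] H)))) ∂μ :=
        (integral_sub hI hI').symm
      rw [h2]
      have h3 : ‖∫ ω, (K ω ∘L ((A + X) ∘L Ring.inverse (A + X - ζ ω • (1 : H →L[ℂ] H))) -
            K ω ∘L ((A + X') ∘L Ring.inverse (A + X' - ζ ω • (1 : H →L[ℂ] H)))) ∂μ‖ ≤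
          ∫ ω, ‖K ω‖ / Metric.infDist (ζ ω) (spectrum ℂ A) *
            (d₀ * (d₀ + ‖A‖) / (d₀ - r) ^ 2) * ‖X - X'‖ ∂μ := by
        apply norm_integral_le_of_norm_le ((hvInt.mul_const _).mul_const _)
        filter_upwards [hdist] with ω hω
        exact aux_pointwise_diff A hA d₀ hd₀ hr0 hrd (ζ ω) hω (K ω) X X' hXr hXr'
      rwa [integral_mul_const, integral_mul_const, ← hv] at h3
    -- setting up the fixed point argument
    set Bs : Set (H →L[ℂ] H) := Metric.closedBall 0 rmin with hBs
    haveI : CompleteSpace Bs := Metric.isClosed_closedBall.completeSpace_coe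
    haveI : Nonempty Bs := ⟨⟨0, Metric.mem_closedBall_self hrmin0⟩⟩
    have hmem : ∀ Y : Bs, ‖(Y : H →L[ℂ] H)‖ ≤ rmin := by
      intro Y
      exact mem_closedBall_zero_iff.mp Y.2
    have hd₀rmin : (0:ℝ) < d₀ - rmin := by linarith
    have hself : ∀ Y : Bs, Vint μ ζ K (A + (Y : H →L[ℂ] H)) ∈ Bs := by
      intro Y
      apply mem_closedBall_zero_iff.mpr
      calc ‖Vint μ ζ K (A + (Y : H →L[ℂ] H))‖ ≤ v * (d₀ * (‖A‖ + rmin) / (d₀ - rmin)) :=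
            hVnorm _ rmin (hmem Y) hrmin0 hrmind
        _ = v * (d₀ * (‖A‖ + rmin)) / (d₀ - rmin) := by ring
        _ = rmin * (d₀ - rmin) / (d₀ - rmin) := by rw [hfix]
        _ = rmin := by field_simp
    set Φ : Bs → Bs := fun Y => ⟨Vint μ ζ K (A + (Y : H →L[ℂ] H)), hself Y⟩ with hΦ
    have hqnn : 0 ≤ v * (d₀ * (d₀ + ‖A‖) / (d₀ - rmin) ^ 2) := by
      apply mul_nonneg hv0
      apply div_nonneg (mul_nonneg hd₀.le (by linarith [norm_nonneg A])) (sq_nonneg _)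
    set q : NNReal := ⟨v * (d₀ * (d₀ + ‖A‖) / (d₀ - rmin) ^ 2), hqnn⟩ with hq
    have hq1 : (q : ℝ) < 1 := by
      have h4 := hqlt rmin hminmax
      show v * (d₀ * (d₀ + ‖A‖) / (d₀ - rmin) ^ 2) < 1
      rw [show v * (d₀ * (d₀ + ‖A‖) / (d₀ - rmin) ^ 2) =
        v * (d₀ * (d₀ + ‖A‖)) / (d₀ - rmin) ^ 2 from by ring,
        div_lt_one (pow_pos hd₀rmin 2)]
      exact h4
    have hcontr : ContractingWith q Φ := by
      constructor
      · exact_mod_cast hq1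
      · apply LipschitzWith.of_dist_le_mul
        intro Y Y'
        rw [Subtype.dist_eq, Subtype.dist_eq, dist_eq_norm, dist_eq_norm]
        exact hdiff rmin hrmin0 hrmind _ _ (hmem Y) (hmem Y')
    set X₀ : Bs := ContractingWith.fixedPoint Φ hcontr with hX₀
    have hfp : Φ X₀ = X₀ := hcontr.fixedPoint_isFixedPt
    have hXeq : (X₀ : H →L[ℂ] H) = Vint μ ζ K (A + (X₀ : H →L[ℂ] H)) :=
      (congrArg Subtype.val hfp).symm
    have hXnorm : ‖(X₀ : H →L[ℂ] H)‖ ≤ rmin := hmem X₀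
    refine ⟨(X₀ : H →L[ℂ] H), ⟨hXnorm, ?_, ?_, hXeq⟩, ?_⟩
    · filter_upwards [hdist] with ω hω
      obtain ⟨w, hw, -⟩ := aux_resolvent_perturbed A hA d₀ hd₀ (ζ ω) hω _
        (lt_of_le_of_lt hXnorm hrmind)
      exact ⟨w, hw⟩
    · exact hint _ rmin hXnorm hrmin0 hrmind
    · intro r hr1 hr2 X' hX' hsol'
      have hr0 : 0 ≤ r := le_trans hrmin0 hr1
      have hrd : r < d₀ := lt_of_lt_of_le hr2 hmaxd
      have hXr : ‖(X₀ : H →L[ℂ] H)‖ ≤ r := le_trans hXnorm hr1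
      have h6 := hdiff r hr0 hrd X' (X₀ : H →L[ℂ] H) hX' hXr
      rw [← hsol'.2.2, ← hXeq] at h6
      have h7 : v * (d₀ * (d₀ + ‖A‖) / (d₀ - r) ^ 2) < 1 := by
        have h8 := hqlt r hr2
        have h9 : v * (d₀ * (d₀ + ‖A‖) / (d₀ - r) ^ 2) =
            v * (d₀ * (d₀ + ‖A‖)) / (d₀ - r) ^ 2 := by ring
        rw [h9, div_lt_one (by nlinarith)]
        exact h8
      have h10 : ‖X' - (X₀ : H →L[ℂ] H)‖ ≤ 0 := by
        nlinarith [norm_nonneg (X' - (X₀ : H →L[ℂ] H))]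
      have h11 : X' - (X₀ : H →L[ℂ] H) = 0 := by
        rw [← norm_le_zero_iff]
        exact h10
      exact sub_eq_zero.mp h11
end

section
/- Suppose X is a bounded operator on H₁ such that for μ-a.e. ω the operator H − ζ(ω)·I is boundedly invertible, ω ↦ K(ω)∘H∘(H−ζ(ω))⁻¹ is Bochner integrable, and X = V(Ã + X), where H := Ã + X. If u ∈ H₁, u ≠ 0, z ∈ ℂ and H u = z u, then z ≠ ζ(ω) for a.e. ω, the function ω ↦ (z/(z−ζ(ω)))·(K(ω) u) is Bochner integrable, and Ã u − z u + ∫ (z/(z−ζ(ω)))·(K(ω) u) dμ(ω) = 0; that is, u lies in the kernel of the analytically continued transfer function M(z). -/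
open MeasureTheory ContinuousLinearMap

/-! On an eigenvector `u` of `H = Ã + X` with eigenvalue `z`, the invertible operator `H - ζ`
acts as multiplication by `z - ζ`, hence `z ≠ ζ` and `(H - ζ)⁻¹` acts as `(z - ζ)⁻¹`. So the
integrand `K(ω) H (H - ζ(ω))⁻¹` of the basic equation sends `u` to `(z / (z - ζ(ω))) K(ω) u`,
and applying the basic equation `X = V(H)` to `u` turns `X u = z u - Ã u` into the integral
term of `M(z) u`. -/

namespace ContinuousLinearMap

variable {𝕜 E : Type*} [NontriviallyNormedField 𝕜] [NormedAddCommGroup E] [NormedSpace 𝕜 E]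

theorem ringInverse_apply_apply {T : E →L[𝕜] E} (hT : IsUnit T) (v : E) :
    Ring.inverse T (T v) = v := by
  rw [← mul_apply_eq_comp, Ring.inverse_mul_cancel T hT, one_apply_eq_self]

theorem ne_zero_of_isUnit_of_apply_eq_smul {T : E →L[𝕜] E} (hT : IsUnit T) {u : E} {c : 𝕜}
    (hTu : T u = c • u) (hu : u ≠ 0) : c ≠ 0 := by
  rintro rfl
  rw [zero_smul] at hTu
  exact hu (by rw [← ringInverse_apply_apply hT u, hTu, map_zero])

theorem ringInverse_apply_of_apply_eq_smul {T : E →L[𝕜] E} (hT : IsUnit T) {u : E} {c : 𝕜}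
    (hTu : T u = c • u) (hu : u ≠ 0) : Ring.inverse T u = c⁻¹ • u := by
  rw [eq_inv_smul_iff₀ (ne_zero_of_isUnit_of_apply_eq_smul hT hTu hu), ← map_smul, ← hTu,
    ringInverse_apply_apply hT]

theorem sub_smul_one_apply_of_apply_eq_smul {Y : E →L[𝕜] E} {u : E} {z : 𝕜}
    (hYu : Y u = z • u) (w : 𝕜) : (Y - w • (1 : E →L[𝕜] E)) u = (z - w) • u := by
  rw [sub_apply, hYu, smul_apply, one_apply_eq_self, sub_smul]

theorem comp_ringInverse_sub_smul_one_apply_of_apply_eq_smul {Y : E →L[𝕜] E} {u : E} {z w : 𝕜}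
    (hYu : Y u = z • u) (hu : u ≠ 0) (hYw : IsUnit (Y - w • (1 : E →L[𝕜] E))) :
    (Y ∘L Ring.inverse (Y - w • (1 : E →L[𝕜] E))) u = (z / (z - w)) • u := by
  rw [comp_apply, ringInverse_apply_of_apply_eq_smul hYw
    (sub_smul_one_apply_of_apply_eq_smul hYu w) hu, map_smul, hYu, smul_smul, div_eq_inv_mul]

end ContinuousLinearMap

theorem eigenvector_of_solution_in_ker_transfer_general
    {H : Type*} [NormedAddCommGroup H] [InnerProductSpace ℂ H]
    {Ω : Type*} [MeasurableSpace Ω] (μ : Measure Ω)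
    (ζ : Ω → ℂ)
    (K : Ω → H →L[ℂ] H)
    (A : H →L[ℂ] H)
    (X : H →L[ℂ] H)
    (hunit : ∀ᵐ ω ∂μ, IsUnit (A + X - ζ ω • (1 : H →L[ℂ] H)))
    (hint : Integrable (fun ω =>
      K ω ∘L ((A + X) ∘L Ring.inverse (A + X - ζ ω • (1 : H →L[ℂ] H)))) μ)
    (hfix : X = ∫ ω,
      K ω ∘L ((A + X) ∘L Ring.inverse (A + X - ζ ω • (1 : H →L[ℂ] H))) ∂μ)
    (u : H) (hu : u ≠ 0) (z : ℂ) (heig : (A + X) u = z • u) :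
    (∀ᵐ ω ∂μ, z ≠ ζ ω) ∧
    Integrable (fun ω => (z / (z - ζ ω)) • (K ω u)) μ ∧
    A u - z • u + ∫ ω, (z / (z - ζ ω)) • (K ω u) ∂μ = 0 := by
  have hz : ∀ᵐ ω ∂μ, z ≠ ζ ω := hunit.mono fun ω hω => sub_ne_zero.mp <|
    ne_zero_of_isUnit_of_apply_eq_smul hω (sub_smul_one_apply_of_apply_eq_smul heig _) hu
  have hintegrand : ∀ᵐ ω ∂μ,
      (K ω ∘L ((A + X) ∘L Ring.inverse (A + X - ζ ω • (1 : H →L[ℂ] H)))) u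
        = (z / (z - ζ ω)) • K ω u := hunit.mono fun ω hω => by
    rw [comp_apply, comp_ringInverse_sub_smul_one_apply_of_apply_eq_smul heig hu hω, map_smul]
  have hXu : X u = ∫ ω, (z / (z - ζ ω)) • K ω u ∂μ := by
    rw [hfix, integral_apply hint]
    exact integral_congr_ae hintegrand
  refine ⟨hz, (hint.apply_continuousLinearMap u).congr hintegrand, ?_⟩
  rw [← hXu, sub_add_eq_add_sub, ← add_apply, heig, sub_self]

/-- Characteristic property of the basic equation (Section 2): if `H = Ã + X` solves
the basic equation and `H u = z u` with `u ≠ 0`, then `z ≠ ζ(ω)` a.e., the function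
`ω ↦ (z/(z-ζ(ω))) K(ω)u` is Bochner integrable, and
`Ã u - z u + ∫ (z/(z-ζ(ω))) K(ω)u dμ(ω) = 0`, i.e. `u ∈ ker M(z)`. -/
theorem eigenvector_of_solution_in_ker_transfer
    {H : Type*} [NormedAddCommGroup H] [InnerProductSpace ℂ H] [CompleteSpace H]
    {Ω : Type*} [MeasurableSpace Ω] (μ : Measure Ω)
    (ζ : Ω → ℂ) (hζ : Measurable ζ)
    (K : Ω → H →L[ℂ] H) (hK : Integrable K μ)
    (A : H →L[ℂ] H) (hA : IsSelfAdjoint A)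
    (X : H →L[ℂ] H)
    (hunit : ∀ᵐ ω ∂μ, IsUnit (A + X - ζ ω • (1 : H →L[ℂ] H)))
    (hint : Integrable (fun ω =>
      K ω ∘L ((A + X) ∘L Ring.inverse (A + X - ζ ω • (1 : H →L[ℂ] H)))) μ)
    (hfix : X = ∫ ω,
      K ω ∘L ((A + X) ∘L Ring.inverse (A + X - ζ ω • (1 : H →L[ℂ] H))) ∂μ)
    (u : H) (hu : u ≠ 0) (z : ℂ) (heig : (A + X) u = z • u) :
    (∀ᵐ ω ∂μ, z ≠ ζ ω) ∧
    Integrable (fun ω => (z / (z - ζ ω)) • (K ω u)) μ ∧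
    A u - z • u + ∫ ω, (z / (z - ζ ω)) • (K ω u) ∂μ = 0 :=
  eigenvector_of_solution_in_ker_transfer_general μ ζ K A X hunit hint hfix u hu z heig
end
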